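/- Sharpness of the 1/4 constant: for the parallelogram K ⊆ ℝ² with vertices (0,0), (1,1), (0,1), (−1,0), and the direction ω = (1,0), it holds max{F_K(ω), F_K(−ω)} = (1/4)·B_K(ω). -/

import Mathlib

open scoped RealInnerProductSpace

/-- A point of the Euclidean plane. -/
noncomputable def pt2 (a b : ℝ) : EuclideanSpace ℝ (Fin 2) :=
  (WithLp.equiv 2 (Fin 2 → ℝ)).symm ![a, b]

/-- The support function `H_K(ω) = sup {⟨x, ω⟩ : x ∈ K}`. -/
noncomputable def suppFn (K : Set (EuclideanSpace ℝ (Fin 2)))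
    (ω : EuclideanSpace ℝ (Fin 2)) : ℝ :=
  sSup ((fun x => ⟪x, ω⟫) '' K)

/-- The breadth `B_K(ω) = H_K(ω) + H_K(-ω)`. -/
noncomputable def breadthFn (K : Set (EuclideanSpace ℝ (Fin 2)))
    (ω : EuclideanSpace ℝ (Fin 2)) : ℝ :=
  suppFn K ω + suppFn K (-ω)

/-- The cap `K_{μ,ω} = {x ∈ K : ⟨x,ω⟩ ≥ μ}`. -/
noncomputable def capSet (K : Set (EuclideanSpace ℝ (Fin 2)))
    (ω : EuclideanSpace ℝ (Fin 2)) (μ : ℝ) : Set (EuclideanSpace ℝ (Fin 2)) :=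
  {x ∈ K | μ ≤ ⟪x, ω⟫}

/-- The reflection `T_{μ,ω}(x) = x - 2ω(⟨ω,x⟩ - μ)`. -/
noncomputable def reflMap (ω : EuclideanSpace ℝ (Fin 2)) (μ : ℝ)
    (x : EuclideanSpace ℝ (Fin 2)) : EuclideanSpace ℝ (Fin 2) :=
  x - (2 * (⟪ω, x⟫ - μ)) • ω

/-- The maximal folding cap `K_ω = ∪ {K_{μ,ω} : T_{μ,ω}(K_{μ,ω}) ⊆ K}`. -/
noncomputable def maxFoldCap (K : Set (EuclideanSpace ℝ (Fin 2)))
    (ω : EuclideanSpace ℝ (Fin 2)) : Set (EuclideanSpace ℝ (Fin 2)) :=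
  ⋃ μ ∈ {μ : ℝ | reflMap ω μ '' capSet K ω μ ⊆ K}, capSet K ω μ

/-- The maximal folding height `F_K(ω) = B_{K_ω}(ω)`. -/
noncomputable def foldHeight (K : Set (EuclideanSpace ℝ (Fin 2)))
    (ω : EuclideanSpace ℝ (Fin 2)) : ℝ :=
  breadthFn (maxFoldCap K ω) ω

/-!
The parallelogram is `{(x, y) | 0 ≤ y ≤ 1, y - 1 ≤ x ≤ y}`. Folding along the line `x = μ`
keeps the cap `x ≥ μ` inside it exactly when `μ ≥ 1/2`: the vertex `(1, 1)` is sent to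
`(2μ - 1, 1)`, which must satisfy `x ≥ 0`. So the maximal folding cap is `{x ≥ 1/2}`, of breadth
`1 - 1/2 = 1/2`, while the breadth of the parallelogram is `2`. The direction `-ω` behaves the
same way, with the vertex `(-1, 0)`.
-/

section Folding

variable {K : Set (EuclideanSpace ℝ (Fin 2))} {ω : EuclideanSpace ℝ (Fin 2)}

lemma capSet_antitone : Antitone (capSet K ω) :=
  fun _ _ hμν _ ⟨hxK, hνx⟩ => ⟨hxK, hμν.trans hνx⟩

lemma maxFoldCap_eq_capSet {μ₀ : ℝ}
    (h : IsLeast {μ | reflMap ω μ '' capSet K ω μ ⊆ K} μ₀) :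
    maxFoldCap K ω = capSet K ω μ₀ :=
  subset_antisymm (Set.iUnion₂_subset fun _ hμ => capSet_antitone (h.2 hμ))
    (Set.subset_biUnion_of_mem h.1)

lemma suppFn_eq_of_isGreatest {M : ℝ} (h : IsGreatest ((⟪·, ω⟫) '' K) M) :
    suppFn K ω = M :=
  h.csSup_eq

lemma breadthFn_capSet {M μ : ℝ} (hM : IsGreatest ((⟪·, ω⟫) '' K) M)
    (hμ : μ ∈ (⟪·, ω⟫) '' K) :
    breadthFn (capSet K ω μ) ω = M - μ := by
  obtain ⟨⟨xM, hxM, rfl⟩, hMub⟩ := hM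
  obtain ⟨xμ, hxμ, rfl⟩ := hμ
  have hsup : suppFn (capSet K ω ⟪xμ, ω⟫) ω = ⟪xM, ω⟫ :=
    suppFn_eq_of_isGreatest ⟨⟨xM, ⟨hxM, hMub ⟨xμ, hxμ, rfl⟩⟩, rfl⟩,
      by rintro _ ⟨x, ⟨hxK, -⟩, rfl⟩; exact hMub ⟨x, hxK, rfl⟩⟩
  have hinf : suppFn (capSet K ω ⟪xμ, ω⟫) (-ω) = -⟪xμ, ω⟫ := by
    refine suppFn_eq_of_isGreatest ⟨⟨xμ, ⟨hxμ, le_rfl⟩, inner_neg_right _ _⟩, ?_⟩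
    rintro _ ⟨x, ⟨-, hx⟩, rfl⟩
    simpa only [inner_neg_right, neg_le_neg_iff] using hx
  rw [breadthFn, hsup, hinf, sub_eq_add_neg]

end Folding

@[simp] lemma pt2_apply_zero (a b : ℝ) : pt2 a b 0 = a := rfl

@[simp] lemma pt2_apply_one (a b : ℝ) : pt2 a b 1 = b := rfl

lemma inner_pt2 (x : EuclideanSpace ℝ (Fin 2)) (a b : ℝ) :
    ⟪x, pt2 a b⟫ = x 0 * a + x 1 * b := by
  simp [PiLp.inner_apply, Fin.sum_univ_two, mul_comm]

lemma neg_pt2 (a b : ℝ) : -pt2 a b = pt2 (-a) (-b) := by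
  ext i; fin_cases i <;> rfl

lemma smul_pt2_add_smul_pt2 (s t a b c d : ℝ) :
    s • pt2 a b + t • pt2 c d = pt2 (s * a + t * c) (s * b + t * d) := by
  ext i; fin_cases i <;> rfl

lemma reflMap_pt2_apply_zero (s μ : ℝ) (x : EuclideanSpace ℝ (Fin 2)) :
    reflMap (pt2 s 0) μ x 0 = x 0 - 2 * (s * x 0 - μ) * s := by
  simp [reflMap, real_inner_comm, inner_pt2, mul_comm]

lemma reflMap_pt2_apply_one (s μ : ℝ) (x : EuclideanSpace ℝ (Fin 2)) :
    reflMap (pt2 s 0) μ x 1 = x 1 := by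
  simp [reflMap]

noncomputable abbrev parallelogram : Set (EuclideanSpace ℝ (Fin 2)) :=
  convexHull ℝ {pt2 0 0, pt2 1 1, pt2 0 1, pt2 (-1) 0}

lemma mem_parallelogram_iff (x : EuclideanSpace ℝ (Fin 2)) :
    x ∈ parallelogram ↔ 0 ≤ x 1 ∧ x 1 ≤ 1 ∧ x 1 - 1 ≤ x 0 ∧ x 0 ≤ x 1 := by
  constructor
  · refine fun hx => convexHull_min
      (t := {y : EuclideanSpace ℝ (Fin 2) | 0 ≤ y 1 ∧ y 1 ≤ 1 ∧ y 1 - 1 ≤ y 0 ∧ y 0 ≤ y 1})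
      ?_ ?_ hx
    · rintro v (rfl | rfl | rfl | rfl) <;> norm_num
    · rintro u ⟨hu₁, hu₂, hu₃, hu₄⟩ v ⟨hv₁, hv₂, hv₃, hv₄⟩ a b ha hb hab
      simp only [Set.mem_ofPred_eq, PiLp.add_apply, PiLp.smul_apply, smul_eq_mul]
      refine ⟨by positivity, ?_, ?_, ?_⟩ <;> nlinarith
  · rintro ⟨hb₀, hb₁, hab, hba⟩
    have hvert : ∀ v ∈ ({pt2 0 0, pt2 1 1, pt2 0 1, pt2 (-1) 0} : Set _), v ∈ parallelogram :=
      fun v hv => subset_convexHull ℝ _ hv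
    -- `x` lies on the horizontal segment between the edges `[(-1,0),(0,1)]` and `[(0,0),(1,1)]`.
    have hleft := convex_convexHull ℝ _ (hvert (pt2 (-1) 0) (by simp))
      (hvert (pt2 0 1) (by simp)) (sub_nonneg.2 hb₁) hb₀ (sub_add_cancel 1 (x 1))
    have hright := convex_convexHull ℝ _ (hvert (pt2 0 0) (by simp))
      (hvert (pt2 1 1) (by simp)) (sub_nonneg.2 hb₁) hb₀ (sub_add_cancel 1 (x 1))
    have := convex_convexHull ℝ _ hleft hright (sub_nonneg.2 hba) (by linarith)
      (add_sub_cancel (x 1 - x 0) 1)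
    convert this using 1
    simp only [smul_pt2_add_smul_pt2]
    ext i; fin_cases i <;> simp <;> ring

section Parallelogram

variable {s : ℝ}

lemma isGreatest_inner_parallelogram (hs : s = 1 ∨ s = -1) :
    IsGreatest ((⟪·, pt2 s 0⟫) '' parallelogram) 1 := by
  refine ⟨?_, ?_⟩
  · rcases hs with rfl | rfl
    · exact ⟨pt2 1 1, (mem_parallelogram_iff _).2 (by norm_num),
        by norm_num only [inner_pt2, pt2_apply_zero, pt2_apply_one]⟩
    · exact ⟨pt2 (-1) 0, (mem_parallelogram_iff _).2 (by norm_num),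
        by norm_num only [inner_pt2, pt2_apply_zero, pt2_apply_one]⟩
  · rintro _ ⟨x, hx, rfl⟩
    obtain ⟨hx₁, hx₂, hx₃, hx₄⟩ := (mem_parallelogram_iff x).1 hx
    rcases hs with rfl | rfl <;> simp only [inner_pt2] <;> linarith

lemma half_mem_inner_parallelogram (hs : s = 1 ∨ s = -1) :
    (1 / 2 : ℝ) ∈ (⟪·, pt2 s 0⟫) '' parallelogram := by
  rcases hs with rfl | rfl
  · exact ⟨pt2 (1 / 2) (1 / 2), (mem_parallelogram_iff _).2 (by norm_num),
      by norm_num only [inner_pt2, pt2_apply_zero, pt2_apply_one]⟩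
  · exact ⟨pt2 (-1 / 2) (1 / 2), (mem_parallelogram_iff _).2 (by norm_num),
      by norm_num only [inner_pt2, pt2_apply_zero, pt2_apply_one]⟩

lemma isLeast_foldable_parallelogram (hs : s = 1 ∨ s = -1) :
    IsLeast {μ | reflMap (pt2 s 0) μ '' capSet parallelogram (pt2 s 0) μ ⊆ parallelogram}
      (1 / 2) := by
  refine ⟨?_, fun μ hμ => ?_⟩
  · rintro _ ⟨x, ⟨hx, hμx⟩, rfl⟩
    rw [inner_pt2] at hμx
    obtain ⟨hx₁, hx₂, hx₃, hx₄⟩ := (mem_parallelogram_iff x).1 hx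
    rw [mem_parallelogram_iff, reflMap_pt2_apply_zero, reflMap_pt2_apply_one]
    rcases hs with rfl | rfl <;> exact ⟨hx₁, hx₂, by linarith, by linarith⟩
  · -- Below level `1/2` the vertex farthest in direction `pt2 s 0` is folded out of the parallelogram.
    by_contra! hμ_lt
    obtain ⟨v, hv, hv_top⟩ := (isGreatest_inner_parallelogram hs).1
    simp only [inner_pt2] at hv_top
    have hfold := hμ ⟨v, ⟨hv, by rw [inner_pt2]; linarith⟩, rfl⟩
    rw [mem_parallelogram_iff, reflMap_pt2_apply_zero, reflMap_pt2_apply_one] at hfold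
    obtain ⟨-, -, hfold_ge, hfold_le⟩ := hfold
    obtain ⟨hv₁, hv₂, hv₃, hv₄⟩ := (mem_parallelogram_iff v).1 hv
    rcases hs with rfl | rfl <;> linarith

lemma foldHeight_parallelogram (hs : s = 1 ∨ s = -1) :
    foldHeight parallelogram (pt2 s 0) = 1 / 2 := by
  rw [foldHeight, maxFoldCap_eq_capSet (isLeast_foldable_parallelogram hs),
    breadthFn_capSet (isGreatest_inner_parallelogram hs) (half_mem_inner_parallelogram hs)]
  norm_num

end Parallelogram

lemma breadthFn_parallelogram : breadthFn parallelogram (pt2 1 0) = 2 := by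
  rw [breadthFn, neg_pt2, neg_zero,
    suppFn_eq_of_isGreatest (isGreatest_inner_parallelogram (.inl rfl)),
    suppFn_eq_of_isGreatest (isGreatest_inner_parallelogram (.inr rfl))]
  norm_num

/-- Sharpness of the 1/4 constant: for the parallelogram with vertices
`(0,0), (1,1), (0,1), (-1,0)` and `ω = (1,0)`, one has
`max {F_K(ω), F_K(-ω)} = (1/4) B_K(ω)`. -/
theorem quarter_constant_sharp :
    max (foldHeight (convexHull ℝ {pt2 0 0, pt2 1 1, pt2 0 1, pt2 (-1) 0}) (pt2 1 0))
        (foldHeight (convexHull ℝ {pt2 0 0, pt2 1 1, pt2 0 1, pt2 (-1) 0}) (-pt2 1 0)) =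
      (1 / 4) * breadthFn (convexHull ℝ {pt2 0 0, pt2 1 1, pt2 0 1, pt2 (-1) 0}) (pt2 1 0) := by
  rw [neg_pt2, neg_zero, foldHeight_parallelogram (.inl rfl),
    foldHeight_parallelogram (.inr rfl), breadthFn_parallelogram]
  norm_num
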